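/- Let k ≥ 1 and let p_0, …, p_k ∈ [0,1] be distinct points with dispersion h = min_{i≠j}|p_i − p_j|. Let θ, θ̂ ∈ ℝ^{k+1} be coefficient vectors of two polynomials of degree at most k, and let y, ŷ ∈ ℝ^{k+1} be their respective value vectors y_i = ∑_{j=0}^k θ_j p_i^j and ŷ_i = ∑_{j=0}^k θ̂_j p_i^j. Then ‖θ − θ̂‖_1 ≤ 2^k · h^{-k} · ‖y − ŷ‖_1. -/

import Mathlib

/-- The dispersion of a tuple of reals: `h(p) = min_{i ≠ j} |p i - p j|`. -/
noncomputable def dispersion {n : ℕ} (p : Fin n → ℝ) : ℝ :=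
  sInf {d : ℝ | ∃ i j, i ≠ j ∧ d = |p i - p j|}

/-!
The difference `q` of the two polynomials has degree at most `k`, so Lagrange interpolation
writes it as `∑ᵢ q(pᵢ) Lᵢ`, and it suffices to bound the coefficient ℓ¹ norm of each basis
polynomial `Lᵢ = ∏_{m ≠ i} (X - p_m) / (p_i - p_m)` by `2^k / h^k`. The scalar factor is at most
`h^{-k}`. The coefficients of `∏ (X - a_m)` are dominated in absolute value by those of
`∏ (X + |a_m|)`, whose coefficient sum is its value `∏ (1 + |a_m|) ≤ 2^k` at `1`.
-/

open Polynomial Finset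

lemma dispersion_le_abs_sub {n : ℕ} (p : Fin n → ℝ) {i j : Fin n} (hij : i ≠ j) :
    dispersion p ≤ |p i - p j| :=
  csInf_le ⟨0, by rintro _ ⟨_, _, _, rfl⟩; exact abs_nonneg _⟩ ⟨i, j, hij, rfl⟩

lemma dispersion_pos {n : ℕ} {p : Fin n → ℝ} (hp : Function.Injective p) {i j : Fin n}
    (hij : i ≠ j) : 0 < dispersion p := by
  let S := {d : ℝ | ∃ i j, i ≠ j ∧ d = |p i - p j|}
  have hS : S.Finite :=
    (Set.finite_range fun q : Fin n × Fin n => |p q.1 - p q.2|).subset <| by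
      rintro _ ⟨i, j, _, rfl⟩
      exact ⟨(i, j), rfl⟩
  obtain ⟨i', j', hij', hd⟩ : sInf S ∈ S := Set.Nonempty.csInf_mem ⟨_, i, j, hij, rfl⟩ hS
  change 0 < sInf S
  rw [hd]
  exact abs_pos.2 (sub_ne_zero.2 (hp.ne hij'))

lemma inv_abs_sub_le_inv_dispersion {n : ℕ} {p : Fin n → ℝ} (hp : Function.Injective p)
    {i j : Fin n} (hij : i ≠ j) : |p i - p j|⁻¹ ≤ (dispersion p)⁻¹ :=
  inv_anti₀ (dispersion_pos hp hij) (dispersion_le_abs_sub p hij)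

lemma abs_coeff_X_sub_C_mul_le {f g : ℝ[X]} (hfg : ∀ n, |f.coeff n| ≤ g.coeff n) (a : ℝ)
    (n : ℕ) : |((X - C a) * f).coeff n| ≤ ((X + C |a|) * g).coeff n := by
  have hX : |(X * f).coeff n| ≤ (X * g).coeff n := by
    cases n with
    | zero => simp
    | succ m => rw [coeff_X_mul, coeff_X_mul]; exact hfg m
  rw [sub_mul, add_mul, coeff_sub, coeff_add, coeff_C_mul, coeff_C_mul]
  calc |(X * f).coeff n - a * f.coeff n|
      ≤ |(X * f).coeff n| + |a| * |f.coeff n| := by rw [← abs_mul]; exact abs_sub _ _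
    _ ≤ (X * g).coeff n + |a| * g.coeff n := by gcongr; exact hfg n

lemma abs_coeff_prod_X_sub_C_le {ι : Type*} [DecidableEq ι] (t : Finset ι) (a : ι → ℝ)
    (n : ℕ) : |(∏ m ∈ t, (X - C (a m))).coeff n| ≤ (∏ m ∈ t, (X + C |a m|)).coeff n := by
  induction t using Finset.induction generalizing n with
  | empty => by_cases hn : n = 0 <;> simp [coeff_one, hn]
  | insert i t hi ih =>
    rw [prod_insert hi, prod_insert hi]
    exact abs_coeff_X_sub_C_mul_le ih (a i) n

lemma sum_abs_coeff_prod_X_sub_C_le {ι : Type*} [DecidableEq ι] (t : Finset ι) (a : ι → ℝ) :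
    ∑ n ∈ range (#t + 1), |(∏ m ∈ t, (X - C (a m))).coeff n| ≤ ∏ m ∈ t, (1 + |a m|) := by
  have hdeg : (∏ m ∈ t, (X + C |a m|)).natDegree < #t + 1 := by
    have := natDegree_prod_le t fun m => X + C |a m|
    simp only [natDegree_X_add_C, sum_const, smul_eq_mul, mul_one] at this
    omega
  calc ∑ n ∈ range (#t + 1), |(∏ m ∈ t, (X - C (a m))).coeff n|
      ≤ ∑ n ∈ range (#t + 1), (∏ m ∈ t, (X + C |a m|)).coeff n := by
        gcongr with n
        exact abs_coeff_prod_X_sub_C_le t a n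
    _ = (∏ m ∈ t, (X + C |a m|)).eval 1 := by simp [eval_eq_sum_range' hdeg]
    _ = ∏ m ∈ t, (1 + |a m|) := by simp [eval_prod]

lemma sum_abs_coeff_basis_le {ι : Type*} [DecidableEq ι] {s : Finset ι} {v : ι → ℝ} {i : ι}
    (hi : i ∈ s) (hv : ∀ m ∈ s, |v m| ≤ 1) {c : ℝ} (hc : ∀ m ∈ s, m ≠ i → |v i - v m|⁻¹ ≤ c) :
    ∑ n ∈ range #s, |(Lagrange.basis s v i).coeff n| ≤ 2 ^ (#s - 1) * c ^ (#s - 1) := by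
  have hcard : #(s.erase i) = #s - 1 := card_erase_of_mem hi
  have hbasis : Lagrange.basis s v i =
      C (∏ m ∈ s.erase i, (v i - v m)⁻¹) * ∏ m ∈ s.erase i, (X - C (v m)) := by
    simp only [Lagrange.basis, Lagrange.basisDivisor, prod_mul_distrib, map_prod]
  have hscalar : |∏ m ∈ s.erase i, (v i - v m)⁻¹| ≤ c ^ (#s - 1) := by
    rw [abs_prod, ← hcard, ← prod_const]
    refine prod_le_prod (fun _ _ => abs_nonneg _) fun m hm => ?_
    rw [abs_inv]
    exact hc m (mem_of_mem_erase hm) (ne_of_mem_erase hm)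
  have hmonic : ∑ n ∈ range #s, |(∏ m ∈ s.erase i, (X - C (v m))).coeff n| ≤ 2 ^ (#s - 1) := by
    rw [← card_erase_add_one hi, Nat.add_sub_cancel, ← prod_const]
    refine (sum_abs_coeff_prod_X_sub_C_le _ v).trans (prod_le_prod (fun _ _ => by positivity) ?_)
    intro m hm
    linarith [hv m (mem_of_mem_erase hm)]
  calc ∑ n ∈ range #s, |(Lagrange.basis s v i).coeff n|
      = |∏ m ∈ s.erase i, (v i - v m)⁻¹| *
          ∑ n ∈ range #s, |(∏ m ∈ s.erase i, (X - C (v m))).coeff n| := by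
        simp only [hbasis, coeff_C_mul, abs_mul, mul_sum]
    _ ≤ c ^ (#s - 1) * 2 ^ (#s - 1) := by
        gcongr
        exact (abs_nonneg _).trans hscalar
    _ = 2 ^ (#s - 1) * c ^ (#s - 1) := mul_comm _ _

lemma coeff_eq_sum_eval_mul_coeff_basis {F ι : Type*} [Field F] [DecidableEq ι] {s : Finset ι}
    {v : ι → F} (hv : Set.InjOn v s) {f : F[X]} (hf : f.degree < #s) (n : ℕ) :
    f.coeff n = ∑ i ∈ s, f.eval (v i) * (Lagrange.basis s v i).coeff n := by
  conv_lhs => rw [Lagrange.eq_interpolate hv hf]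
  simp only [Lagrange.interpolate_apply, finsetSum_coeff, coeff_C_mul]

lemma sum_abs_coeff_le_of_sum_abs_coeff_basis_le {ι : Type*} [DecidableEq ι] {s : Finset ι}
    {v : ι → ℝ} (hv : Set.InjOn v s) {B : ℝ}
    (hB : ∀ i ∈ s, ∑ n ∈ range #s, |(Lagrange.basis s v i).coeff n| ≤ B) {f : ℝ[X]}
    (hf : f.degree < #s) :
    ∑ n ∈ range #s, |f.coeff n| ≤ B * ∑ i ∈ s, |f.eval (v i)| :=
  calc ∑ n ∈ range #s, |f.coeff n|
      ≤ ∑ n ∈ range #s, ∑ i ∈ s, |f.eval (v i)| * |(Lagrange.basis s v i).coeff n| := by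
        gcongr with n
        rw [coeff_eq_sum_eval_mul_coeff_basis hv hf]
        exact (abs_sum_le_sum_abs _ _).trans_eq (by simp only [abs_mul])
    _ = ∑ i ∈ s, |f.eval (v i)| * ∑ n ∈ range #s, |(Lagrange.basis s v i).coeff n| := by
        rw [sum_comm]
        simp only [mul_sum]
    _ ≤ ∑ i ∈ s, |f.eval (v i)| * B := by
        gcongr with i hi
        exact hB i hi
    _ = B * ∑ i ∈ s, |f.eval (v i)| := by rw [mul_sum]; simp only [mul_comm]

theorem coefficient_estimation_error_general (k : ℕ)
    (p : Fin (k + 1) → ℝ) (hp : ∀ i, p i ∈ Set.Icc (0 : ℝ) 1)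
    (hinj : Function.Injective p)
    (θ θhat : Fin (k + 1) → ℝ) (y yhat : Fin (k + 1) → ℝ)
    (hy : ∀ i, y i = ∑ j : Fin (k + 1), θ j * p i ^ (j : ℕ))
    (hyhat : ∀ i, yhat i = ∑ j : Fin (k + 1), θhat j * p i ^ (j : ℕ)) :
    ∑ j, |θ j - θhat j| ≤
      2 ^ k / (dispersion p) ^ k * ∑ i, |y i - yhat i| := by
  set q := ofFn (k + 1) (θ - θhat)
  have hq_coeff (j : Fin (k + 1)) : q.coeff j = θ j - θhat j := by
    simp [q, ofFn_coeff_eq_val_of_lt _ j.isLt]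
  have hq_eval (i : Fin (k + 1)) : q.eval (p i) = y i - yhat i := by
    simp [q, ofFn_eq_sum_monomial, eval_finsetSum, hy, hyhat, sum_sub_distrib]
  have hbasis : ∀ i ∈ (univ : Finset (Fin (k + 1))),
      ∑ n ∈ range #(univ : Finset (Fin (k + 1))), |(Lagrange.basis univ p i).coeff n| ≤
        2 ^ k * (dispersion p)⁻¹ ^ k :=
    fun i hi => by
      simpa using sum_abs_coeff_basis_le hi
        (fun m _ => abs_le.2 ⟨by linarith [(hp m).1], (hp m).2⟩)
        fun m _ hm => inv_abs_sub_le_inv_dispersion hinj hm.symm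
  have hbound := sum_abs_coeff_le_of_sum_abs_coeff_basis_le hinj.injOn hbasis (f := q)
    (by simpa only [card_univ, Fintype.card_fin] using ofFn_degree_lt (θ - θhat))
  simp only [card_univ, Fintype.card_fin, ← Fin.sum_univ_eq_sum_range, hq_coeff, hq_eval] at hbound
  rwa [div_eq_mul_inv, ← inv_pow]

/-- Estimation-error bound for polynomial coefficients: if `θ` and `θ̂` are
coefficient vectors of polynomials of degree at most `k` with value vectors
`y` and `ŷ` at distinct points `p_0, …, p_k ∈ [0,1]` of dispersion `h`, then
`‖θ - θ̂‖₁ ≤ 2^k · h^{-k} · ‖y - ŷ‖₁`. -/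
theorem coefficient_estimation_error (k : ℕ) (hk : 1 ≤ k)
    (p : Fin (k + 1) → ℝ) (hp : ∀ i, p i ∈ Set.Icc (0 : ℝ) 1)
    (hinj : Function.Injective p)
    (θ θhat : Fin (k + 1) → ℝ) (y yhat : Fin (k + 1) → ℝ)
    (hy : ∀ i, y i = ∑ j : Fin (k + 1), θ j * p i ^ (j : ℕ))
    (hyhat : ∀ i, yhat i = ∑ j : Fin (k + 1), θhat j * p i ^ (j : ℕ)) :
    ∑ j, |θ j - θhat j| ≤
      2 ^ k / (dispersion p) ^ k * ∑ i, |y i - yhat i| :=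
  coefficient_estimation_error_general k p hp hinj θ θhat y yhat hy hyhat
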